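/- (Theorem 1 of the paper, full-matrix form.) Fix a radius p* ≥ 0. For all text-embedding matrices p, p' ∈ ℝ^{m×d_t} with ‖p‖_F ≤ p* and ‖p'‖_F ≤ p*, the cross-attention output satisfies ‖Y(p) − Y(p')‖_F ≤ ( ‖X W_Q‖_F · ‖W_K‖_op · ‖W_V‖_op · p* / √d + √n · ‖W_V‖_op ) · ‖p − p'‖_F; that is, the cross-attention map p ↦ Y(p) is Lipschitz continuous on every bounded set of text embeddings, with Lipschitz constant of the form C₁ p* + C₂ on the ball of radius p*. -/

import Mathlib

open scoped BigOperators
open Matrix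

/-- Frobenius norm of a real matrix. -/
noncomputable def frobNorm {a b : ℕ} (M : Matrix (Fin a) (Fin b) ℝ) : ℝ :=
  Real.sqrt (∑ i, ∑ j, M i j ^ 2)

/-- Operator norm of a real matrix induced by the Euclidean norms. -/
noncomputable def matOpNorm {a b : ℕ} (M : Matrix (Fin a) (Fin b) ℝ) : ℝ :=
  ‖LinearMap.toContinuousLinearMap (Matrix.toEuclideanLin M)‖

/-- Softmax of a vector in `ℝ^k`. -/
noncomputable def softmaxV {k : ℕ} (v : Fin k → ℝ) : Fin k → ℝ :=
  fun j => Real.exp (v j) / ∑ l, Real.exp (v l)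

/-- The cross-attention map `S(p)`. -/
noncomputable def attnS {n m d dx dt : ℕ} (X : Matrix (Fin n) (Fin dx) ℝ)
    (WQ : Matrix (Fin dx) (Fin d) ℝ) (WK : Matrix (Fin dt) (Fin d) ℝ)
    (p : Matrix (Fin m) (Fin dt) ℝ) : Matrix (Fin n) (Fin m) ℝ :=
  Matrix.of fun i => softmaxV fun j => ((X * WQ) * (p * WK)ᵀ) i j / Real.sqrt d

/-- The cross-attention output `Y(p) = S(p) · (p W_V)`. -/
noncomputable def attnY {n m d dx dt dv : ℕ} (X : Matrix (Fin n) (Fin dx) ℝ)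
    (WQ : Matrix (Fin dx) (Fin d) ℝ) (WK : Matrix (Fin dt) (Fin d) ℝ)
    (WV : Matrix (Fin dt) (Fin dv) ℝ)
    (p : Matrix (Fin m) (Fin dt) ℝ) : Matrix (Fin n) (Fin dv) ℝ :=
  attnS X WQ WK p * (p * WV)

/-! ### Auxiliary lemmas about softmax -/

section Softmax

variable {k : ℕ}

lemma softmaxV_nonneg' (v : Fin k → ℝ) (j : Fin k) : 0 ≤ softmaxV v j :=
  div_nonneg (Real.exp_pos _).le (Finset.sum_nonneg fun _ _ => (Real.exp_pos _).le)

lemma sum_softmaxV' [Nonempty (Fin k)] (v : Fin k → ℝ) : ∑ j, softmaxV v j = 1 := by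
  have hZ : 0 < ∑ l, Real.exp (v l) :=
    Finset.sum_pos (fun _ _ => Real.exp_pos _) Finset.univ_nonempty
  simp only [softmaxV, ← Finset.sum_div]
  exact div_self hZ.ne'

lemma softmaxV_le_one' [Nonempty (Fin k)] (v : Fin k → ℝ) (j : Fin k) : softmaxV v j ≤ 1 := by
  have hZ : 0 < ∑ l, Real.exp (v l) :=
    Finset.sum_pos (fun _ _ => Real.exp_pos _) Finset.univ_nonempty
  rw [softmaxV, div_le_one hZ]
  exact Finset.single_le_sum (fun _ _ => (Real.exp_pos _).le) (Finset.mem_univ j)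

/-- The Jacobian of softmax at a point with softmax value `s`, as a continuous linear map. -/
noncomputable def smJ (s : Fin k → ℝ) : (Fin k → ℝ) →L[ℝ] (Fin k → ℝ) :=
  LinearMap.toContinuousLinearMap
  { toFun := fun w j => s j * w j - s j * ∑ l, s l * w l
    map_add' := by
      intro w₁ w₂; funext j
      simp only [Pi.add_apply, mul_add]
      rw [Finset.sum_add_distrib]; ring
    map_smul' := by
      intro c w; funext j
      simp only [Pi.smul_apply, smul_eq_mul, RingHom.id_apply]
      rw [show ∑ l, s l * (c * w l) = c * ∑ l, s l * w l from by
        rw [Finset.mul_sum]; exact Finset.sum_congr rfl fun l _ => by ring]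
      ring }

lemma smJ_apply (s : Fin k → ℝ) (w : Fin k → ℝ) (j : Fin k) :
    smJ s w j = s j * w j - s j * ∑ l, s l * w l := rfl

lemma hasFDerivAt_softmaxV [Nonempty (Fin k)] (x : Fin k → ℝ) :
    HasFDerivAt softmaxV (smJ (softmaxV x)) x := by
  have hZ : 0 < ∑ l, Real.exp (x l) :=
    Finset.sum_pos (fun _ _ => Real.exp_pos _) Finset.univ_nonempty
  apply hasFDerivAt_pi''
  intro j
  have h1 : HasFDerivAt (fun v : Fin k → ℝ => Real.exp (v j))
      (Real.exp (x j) • (ContinuousLinearMap.proj j : (Fin k → ℝ) →L[ℝ] ℝ)) x :=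
    (hasFDerivAt_apply j x).exp
  have h2 : HasFDerivAt (fun v : Fin k → ℝ => ∑ l, Real.exp (v l))
      (∑ l, Real.exp (x l) • (ContinuousLinearMap.proj l : (Fin k → ℝ) →L[ℝ] ℝ)) x :=
    HasFDerivAt.fun_sum fun l _ =>
      (hasFDerivAt_apply l x).exp
  have h3 : HasFDerivAt (fun v : Fin k → ℝ => (∑ l, Real.exp (v l))⁻¹)
      ((-((∑ l, Real.exp (x l)) ^ 2)⁻¹) •
        (∑ l, Real.exp (x l) • (ContinuousLinearMap.proj l : (Fin k → ℝ) →L[ℝ] ℝ))) x :=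
    (hasDerivAt_inv hZ.ne').comp_hasFDerivAt x h2
  have h4 : HasFDerivAt (fun v : Fin k → ℝ => Real.exp (v j) * (∑ l, Real.exp (v l))⁻¹) _ x :=
    h1.mul h3
  have hfun : (fun v : Fin k → ℝ => softmaxV v j)
      = fun v : Fin k → ℝ => Real.exp (v j) * (∑ l, Real.exp (v l))⁻¹ := by
    funext v; simp [softmaxV, div_eq_mul_inv]
  rw [hfun]
  refine h4.congr_fderiv ?_
  ext w
  simp only [ContinuousLinearMap.coe_comp', Function.comp_apply,
    ContinuousLinearMap.proj_apply, ContinuousLinearMap.add_apply,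
    ContinuousLinearMap.coe_smul', Pi.smul_apply, ContinuousLinearMap.coe_sum',
    Finset.sum_apply, smul_eq_mul, smJ_apply, softmaxV]
  rw [show ∑ l, Real.exp (x l) / (∑ l', Real.exp (x l')) * w l
      = (∑ l, Real.exp (x l) * w l) / (∑ l', Real.exp (x l')) from by
    rw [Finset.sum_div]; exact Finset.sum_congr rfl fun l _ => by ring]
  field_simp
  ring

lemma jac_sum_bound (s w : Fin k → ℝ) (hs0 : ∀ j, 0 ≤ s j) (hs1 : ∀ j, s j ≤ 1)
    (hsum : ∑ j, s j = 1) :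
    ∑ j, (s j * w j - s j * ∑ l, s l * w l) ^ 2 ≤ ∑ j, w j ^ 2 := by
  set c : ℝ := ∑ l, s l * w l with hc
  calc ∑ j, (s j * w j - s j * c) ^ 2
      = ∑ j, s j ^ 2 * (w j - c) ^ 2 :=
        Finset.sum_congr rfl fun j _ => by ring
    _ ≤ ∑ j, s j * (w j - c) ^ 2 := by
        refine Finset.sum_le_sum fun j _ => ?_
        have : s j ^ 2 ≤ s j := by nlinarith [hs0 j, hs1 j]
        exact mul_le_mul_of_nonneg_right this (sq_nonneg _)
    _ = (∑ j, s j * w j ^ 2) - c ^ 2 := by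
        have expand : ∀ j : Fin k, s j * (w j - c) ^ 2
            = s j * w j ^ 2 - 2 * c * (s j * w j) + c ^ 2 * s j := fun j => by ring
        rw [Finset.sum_congr rfl fun j _ => expand j]
        rw [Finset.sum_add_distrib, Finset.sum_sub_distrib, ← Finset.mul_sum, ← Finset.mul_sum,
          hsum, ← hc]
        ring
    _ ≤ ∑ j, s j * w j ^ 2 := sub_le_self _ (sq_nonneg _)
    _ ≤ ∑ j, w j ^ 2 := by
        refine Finset.sum_le_sum fun j _ => ?_
        nlinarith [hs1 j, hs0 j, sq_nonneg (w j)]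

/-- Euclidean norm as `sqrt` of a sum of squares. -/
lemma euc_norm_eq' {ι : Type*} [Fintype ι] (x : EuclideanSpace ℝ ι) :
    ‖x‖ = Real.sqrt (∑ j, x j ^ 2) := by
  rw [EuclideanSpace.norm_eq]
  congr 1
  exact Finset.sum_congr rfl fun j _ => by rw [Real.norm_eq_abs, sq_abs]

/-- Softmax is `1`-Lipschitz for the Euclidean norm (squared form). -/
lemma softmax_sq_lipschitz (a b : Fin k → ℝ) :
    ∑ j, (softmaxV a j - softmaxV b j) ^ 2 ≤ ∑ j, (a j - b j) ^ 2 := by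
  rcases Nat.eq_zero_or_pos k with hk | hk
  · subst hk; simp
  haveI : Nonempty (Fin k) := ⟨⟨0, hk⟩⟩
  set E := EuclideanSpace ℝ (Fin k)
  let e : E ≃L[ℝ] (Fin k → ℝ) := PiLp.continuousLinearEquiv 2 ℝ _
  set sm : E → E := fun v => e.symm (softmaxV (e v)) with hsm
  set J : E → (E →L[ℝ] E) := fun v =>
    ((e.symm : (Fin k → ℝ) →L[ℝ] E).comp (smJ (softmaxV (e v)))).comp (e : E →L[ℝ] (Fin k → ℝ))
    with hJ
  have hderiv : ∀ v : E, HasFDerivAt sm (J v) v := by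
    intro v
    have h1 : HasFDerivAt (fun v : E => softmaxV (e v))
        ((smJ (softmaxV (e v))).comp (e : E →L[ℝ] (Fin k → ℝ))) v :=
      (hasFDerivAt_softmaxV (e v)).comp v e.hasFDerivAt
    have h2 := (e.symm.hasFDerivAt (x := softmaxV (e v))).comp v h1
    exact h2
  have hbound : ∀ v : E, ‖J v‖ ≤ 1 := by
    intro v
    refine ContinuousLinearMap.opNorm_le_bound _ zero_le_one fun w => ?_
    rw [one_mul]
    have hcoord : ∀ j, (J v w) j
        = softmaxV (e v) j * w j - softmaxV (e v) j * ∑ l, softmaxV (e v) l * w l := fun j => rfl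
    rw [euc_norm_eq', euc_norm_eq']
    apply Real.sqrt_le_sqrt
    calc ∑ j, (J v w) j ^ 2
        = ∑ j, (softmaxV (e v) j * w j - softmaxV (e v) j * ∑ l, softmaxV (e v) l * w l) ^ 2 :=
          Finset.sum_congr rfl fun j _ => by rw [hcoord]
      _ ≤ ∑ j, w j ^ 2 :=
          jac_sum_bound _ _ (softmaxV_nonneg' _) (softmaxV_le_one' _) (sum_softmaxV' _)
  have key := (convex_univ : Convex ℝ (Set.univ : Set E)).norm_image_sub_le_of_norm_hasFDerivWithin_le
    (fun x _ => (hderiv x).hasFDerivWithinAt) (fun x _ => hbound x)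
    (Set.mem_univ ((e.symm b : E))) (Set.mem_univ ((e.symm a : E)))
  rw [one_mul] at key
  have hL : sm (e.symm a) = (e.symm (softmaxV a) : E) := by simp [hsm]
  have hR : sm (e.symm b) = (e.symm (softmaxV b) : E) := by simp [hsm]
  rw [hL, hR] at key
  have h1 : ‖(e.symm (softmaxV a) - e.symm (softmaxV b) : E)‖
      = Real.sqrt (∑ j, (softmaxV a j - softmaxV b j) ^ 2) := by
    rw [euc_norm_eq']; exact congrArg _ (Finset.sum_congr rfl fun j _ => rfl)
  have h2 : ‖(e.symm a - e.symm b : E)‖ = Real.sqrt (∑ j, (a j - b j) ^ 2) := by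
    have hcoord2 : ∀ j : Fin k, (e.symm a - e.symm b : E) j = a j - b j := fun j => by
      rfl
    rw [euc_norm_eq']
    exact congrArg Real.sqrt (Finset.sum_congr rfl fun j _ => by rw [hcoord2])
  rw [h1, h2] at key
  have hnn : 0 ≤ ∑ j, (softmaxV a j - softmaxV b j) ^ 2 :=
    Finset.sum_nonneg fun _ _ => sq_nonneg _
  have hnn2 : 0 ≤ ∑ j, (a j - b j) ^ 2 := Finset.sum_nonneg fun _ _ => sq_nonneg _
  nlinarith [Real.sq_sqrt hnn, Real.sq_sqrt hnn2,
    Real.sqrt_nonneg (∑ j, (softmaxV a j - softmaxV b j) ^ 2),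
    Real.sqrt_nonneg (∑ j, (a j - b j) ^ 2)]

end Softmax

/-! ### Auxiliary lemmas about matrix norms -/

section MatNorm
open scoped Matrix.Norms.L2Operator
variable {a b c : ℕ}

lemma matOpNorm_eq (M : Matrix (Fin a) (Fin b) ℝ) : matOpNorm M = ‖M‖ := rfl

lemma matOpNorm_nonneg (M : Matrix (Fin a) (Fin b) ℝ) : 0 ≤ matOpNorm M := by
  rw [matOpNorm_eq]; exact norm_nonneg M

lemma frobNorm_nonneg (M : Matrix (Fin a) (Fin b) ℝ) : 0 ≤ frobNorm M := Real.sqrt_nonneg _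

lemma matOpNorm_transpose (M : Matrix (Fin a) (Fin b) ℝ) : matOpNorm Mᵀ = matOpNorm M := by
  rw [matOpNorm_eq, matOpNorm_eq, ← Matrix.l2_opNorm_conjTranspose M]
  congr 1

lemma matOpNorm_mul_le (A : Matrix (Fin a) (Fin b) ℝ) (B : Matrix (Fin b) (Fin c) ℝ) :
    matOpNorm (A * B) ≤ matOpNorm A * matOpNorm B := by
  simpa [matOpNorm_eq] using Matrix.l2_opNorm_mul A B

lemma mulVec_sq_sum_le (M : Matrix (Fin a) (Fin b) ℝ) (x : Fin b → ℝ) :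
    ∑ i, (M *ᵥ x) i ^ 2 ≤ matOpNorm M ^ 2 * ∑ j, x j ^ 2 := by
  set xE : EuclideanSpace ℝ (Fin b) := (EuclideanSpace.equiv (Fin b) ℝ).symm x with hxE
  have h := Matrix.l2_opNorm_mulVec M xE
  have h1 : ‖(EuclideanSpace.equiv (Fin a) ℝ).symm (M *ᵥ xE)‖
      = Real.sqrt (∑ i, (M *ᵥ x) i ^ 2) := by
    rw [euc_norm_eq']
    exact congrArg Real.sqrt (Finset.sum_congr rfl fun i _ => rfl)
  have h2 : ‖xE‖ = Real.sqrt (∑ j, x j ^ 2) := by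
    rw [euc_norm_eq']
    exact congrArg Real.sqrt (Finset.sum_congr rfl fun j _ => rfl)
  rw [h1, h2, ← matOpNorm_eq] at h
  have hs1 : 0 ≤ ∑ i, (M *ᵥ x) i ^ 2 := Finset.sum_nonneg fun _ _ => sq_nonneg _
  have hs2 : 0 ≤ ∑ j, x j ^ 2 := Finset.sum_nonneg fun _ _ => sq_nonneg _
  nlinarith [Real.sq_sqrt hs1, Real.sq_sqrt hs2, Real.sqrt_nonneg (∑ i, (M *ᵥ x) i ^ 2),
    Real.sqrt_nonneg (∑ j, x j ^ 2), matOpNorm_nonneg M]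

lemma matOpNorm_le_frobNorm (M : Matrix (Fin a) (Fin b) ℝ) : matOpNorm M ≤ frobNorm M := by
  refine ContinuousLinearMap.opNorm_le_bound _ (frobNorm_nonneg M) fun x => ?_
  have hx : ‖x‖ = Real.sqrt (∑ j, x j ^ 2) := euc_norm_eq' x
  have hMx : ‖LinearMap.toContinuousLinearMap (Matrix.toEuclideanLin M) x‖
      = Real.sqrt (∑ i, (∑ j, M i j * x j) ^ 2) := by
    rw [euc_norm_eq']
    refine congrArg Real.sqrt (Finset.sum_congr rfl fun i _ => ?_)
    congr 1
  rw [hMx, hx, frobNorm, ← Real.sqrt_mul (x := ∑ i, ∑ j, M i j ^ 2) (Finset.sum_nonneg fun _ _ =>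
    Finset.sum_nonneg fun _ _ => sq_nonneg _)]
  apply Real.sqrt_le_sqrt
  rw [Finset.sum_mul]
  refine Finset.sum_le_sum fun i _ => ?_
  exact Finset.sum_mul_sq_le_sq_mul_sq Finset.univ (fun j => M i j) x

lemma frobNorm_mul_le (A : Matrix (Fin a) (Fin b) ℝ) (B : Matrix (Fin b) (Fin c) ℝ) :
    frobNorm (A * B) ≤ frobNorm A * matOpNorm B := by
  have key : ∀ i, ∑ j, ((A * B) i j) ^ 2 ≤ matOpNorm B ^ 2 * ∑ k, A i k ^ 2 := by
    intro i
    have hrow : ∀ j, (A * B) i j = (Bᵀ *ᵥ (fun k => A i k)) j := by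
      intro j
      simp [Matrix.mul_apply, Matrix.mulVec, dotProduct, mul_comm]
    calc ∑ j, ((A * B) i j) ^ 2 = ∑ j, ((Bᵀ *ᵥ fun k => A i k) j) ^ 2 :=
          Finset.sum_congr rfl fun j _ => by rw [hrow]
      _ ≤ matOpNorm Bᵀ ^ 2 * ∑ k, A i k ^ 2 := mulVec_sq_sum_le Bᵀ _
      _ = matOpNorm B ^ 2 * ∑ k, A i k ^ 2 := by rw [matOpNorm_transpose]
  have hsum : ∑ i, ∑ j, ((A * B) i j) ^ 2 ≤ matOpNorm B ^ 2 * ∑ i, ∑ k, A i k ^ 2 := by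
    rw [Finset.mul_sum]
    exact Finset.sum_le_sum fun i _ => key i
  rw [frobNorm, frobNorm]
  calc Real.sqrt (∑ i, ∑ j, ((A * B) i j) ^ 2)
      ≤ Real.sqrt (matOpNorm B ^ 2 * ∑ i, ∑ k, A i k ^ 2) := Real.sqrt_le_sqrt hsum
    _ = matOpNorm B * Real.sqrt (∑ i, ∑ k, A i k ^ 2) := by
        rw [Real.sqrt_mul (sq_nonneg _), Real.sqrt_sq (matOpNorm_nonneg B)]
    _ = Real.sqrt (∑ i, ∑ k, A i k ^ 2) * matOpNorm B := mul_comm _ _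

lemma frobNorm_add_le (A B : Matrix (Fin a) (Fin b) ℝ) :
    frobNorm (A + B) ≤ frobNorm A + frobNorm B := by
  have conv : ∀ M : Matrix (Fin a) (Fin b) ℝ,
      frobNorm M = ‖((EuclideanSpace.equiv (Fin a × Fin b) ℝ).symm
        (fun p => M p.1 p.2) : EuclideanSpace ℝ (Fin a × Fin b))‖ := by
    intro M
    rw [euc_norm_eq']
    rw [frobNorm]
    refine congrArg Real.sqrt ?_
    rw [Fintype.sum_prod_type]
    exact Finset.sum_congr rfl fun i _ => Finset.sum_congr rfl fun j _ => rfl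
  rw [conv, conv, conv]
  have : ((EuclideanSpace.equiv (Fin a × Fin b) ℝ).symm (fun p => (A + B) p.1 p.2)
      : EuclideanSpace ℝ (Fin a × Fin b))
      = (EuclideanSpace.equiv (Fin a × Fin b) ℝ).symm (fun p => A p.1 p.2)
        + (EuclideanSpace.equiv (Fin a × Fin b) ℝ).symm (fun p => B p.1 p.2) := rfl
  rw [this]
  exact norm_add_le _ _

end MatNorm

/-! ### Bounds specific to cross-attention -/

section Attn

variable {n m d dx dt dv : ℕ}

/-- The rows of `S(p)` are probability vectors, so `‖S(p)‖_F ≤ √n`. -/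
lemma frobNorm_attnS_le (hm : 0 < m) (X : Matrix (Fin n) (Fin dx) ℝ)
    (WQ : Matrix (Fin dx) (Fin d) ℝ) (WK : Matrix (Fin dt) (Fin d) ℝ)
    (q : Matrix (Fin m) (Fin dt) ℝ) :
    frobNorm (attnS X WQ WK q) ≤ Real.sqrt n := by
  haveI : Nonempty (Fin m) := ⟨⟨0, hm⟩⟩
  rw [frobNorm]
  apply Real.sqrt_le_sqrt
  simp only [attnS, Matrix.of_apply]
  calc ∑ i, ∑ j, (softmaxV (fun j => ((X * WQ) * (q * WK)ᵀ) i j / Real.sqrt d) j) ^ 2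
      ≤ ∑ _i : Fin n, (1 : ℝ) := by
        refine Finset.sum_le_sum fun i _ => ?_
        set v : Fin m → ℝ := fun j => ((X * WQ) * (q * WK)ᵀ) i j / Real.sqrt d with hv
        have h1 : ∑ j, (softmaxV v j) ^ 2 ≤ (∑ j, softmaxV v j) ^ 2 :=
          Finset.sum_sq_le_sq_sum_of_nonneg fun j _ => softmaxV_nonneg' v j
        rw [sum_softmaxV' v] at h1
        simpa using h1
    _ = (n : ℝ) := by simp

/-- Softmax row-wise Lipschitz bound for the `S` map. -/
lemma frobNorm_attnS_diff_le (hd : 0 < d) (X : Matrix (Fin n) (Fin dx) ℝ)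
    (WQ : Matrix (Fin dx) (Fin d) ℝ) (WK : Matrix (Fin dt) (Fin d) ℝ)
    (p p' : Matrix (Fin m) (Fin dt) ℝ) :
    frobNorm (attnS X WQ WK p - attnS X WQ WK p')
      ≤ frobNorm ((X * WQ) * ((p - p') * WK)ᵀ) / Real.sqrt d := by
  have hdpos : (0 : ℝ) < (d : ℝ) := by exact_mod_cast hd
  set R := (X * WQ) * (p * WK)ᵀ with hR
  set R' := (X * WQ) * (p' * WK)ᵀ with hR'
  have hRR : (X * WQ) * ((p - p') * WK)ᵀ = R - R' := by
    rw [hR, hR', Matrix.sub_mul, Matrix.transpose_sub, Matrix.mul_sub]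
  rw [hRR]
  have hstep : ∑ i, ∑ j, ((attnS X WQ WK p - attnS X WQ WK p') i j) ^ 2
      ≤ ∑ i, ∑ j, ((R - R') i j) ^ 2 / d := by
    refine Finset.sum_le_sum fun i _ => ?_
    have h := softmax_sq_lipschitz (fun j => R i j / Real.sqrt d)
      (fun j => R' i j / Real.sqrt d)
    calc ∑ j, ((attnS X WQ WK p - attnS X WQ WK p') i j) ^ 2
        = ∑ j, (softmaxV (fun j => R i j / Real.sqrt d) j
            - softmaxV (fun j => R' i j / Real.sqrt d) j) ^ 2 :=
          Finset.sum_congr rfl fun j _ => rfl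
      _ ≤ ∑ j, ((R i j / Real.sqrt d) - (R' i j / Real.sqrt d)) ^ 2 := h
      _ = ∑ j, ((R - R') i j) ^ 2 / d := by
          refine Finset.sum_congr rfl fun j _ => ?_
          rw [div_sub_div_same, div_pow, Real.sq_sqrt hdpos.le]
          rfl
  rw [frobNorm, frobNorm]
  calc Real.sqrt (∑ i, ∑ j, ((attnS X WQ WK p - attnS X WQ WK p') i j) ^ 2)
      ≤ Real.sqrt (∑ i, ∑ j, ((R - R') i j) ^ 2 / d) := Real.sqrt_le_sqrt hstep
    _ = Real.sqrt ((∑ i, ∑ j, ((R - R') i j) ^ 2) / d) := by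
        rw [Finset.sum_div]
        exact congrArg Real.sqrt (Finset.sum_congr rfl fun i _ => (Finset.sum_div _ _ _).symm)
    _ = Real.sqrt (∑ i, ∑ j, ((R - R') i j) ^ 2) / Real.sqrt d := by
        rw [Real.sqrt_div (x := ∑ i, ∑ j, ((R - R') i j) ^ 2) (Finset.sum_nonneg fun _ _ => Finset.sum_nonneg fun _ _ => sq_nonneg _)]

end Attn

/-- Theorem 1 of the paper (full-matrix form): on the Frobenius ball of radius `p*`,
the cross-attention map `p ↦ Y(p)` is Lipschitz with constant
`‖X W_Q‖_F ‖W_K‖_op ‖W_V‖_op p* / √d + √n ‖W_V‖_op`. -/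
theorem attnY_lipschitz_on_ball {n m d dx dt dv : ℕ}
    (hn : 0 < n) (hm : 0 < m) (hd : 0 < d) (hdx : 0 < dx) (hdt : 0 < dt) (hdv : 0 < dv)
    (X : Matrix (Fin n) (Fin dx) ℝ)
    (WQ : Matrix (Fin dx) (Fin d) ℝ) (WK : Matrix (Fin dt) (Fin d) ℝ)
    (WV : Matrix (Fin dt) (Fin dv) ℝ)
    (pstar : ℝ) (hpstar : 0 ≤ pstar)
    (p p' : Matrix (Fin m) (Fin dt) ℝ)
    (hp : frobNorm p ≤ pstar) (hp' : frobNorm p' ≤ pstar) :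
    frobNorm (attnY X WQ WK WV p - attnY X WQ WK WV p')
      ≤ (frobNorm (X * WQ) * matOpNorm WK * matOpNorm WV * pstar / Real.sqrt d
            + Real.sqrt n * matOpNorm WV) * frobNorm (p - p') := by
  set Sp := attnS X WQ WK p with hSp
  set Sp' := attnS X WQ WK p' with hSp'
  set D := p - p' with hD
  have hsd : (0 : ℝ) < Real.sqrt d := Real.sqrt_pos.mpr (by exact_mod_cast hd)
  -- decomposition
  have hdecomp : attnY X WQ WK WV p - attnY X WQ WK WV p'
      = (Sp - Sp') * (p * WV) + Sp' * (D * WV) := by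
    simp only [attnY, ← hSp, ← hSp', hD]
    rw [Matrix.sub_mul, Matrix.sub_mul, Matrix.mul_sub]
    abel
  rw [hdecomp]
  -- bounds for the pieces
  have hnonneg1 : (0 : ℝ) ≤ frobNorm (X * WQ) * (frobNorm D * matOpNorm WK) / Real.sqrt d :=
    div_nonneg (mul_nonneg (frobNorm_nonneg _)
      (mul_nonneg (frobNorm_nonneg _) (matOpNorm_nonneg _))) hsd.le
  have hDK : matOpNorm ((D * WK)ᵀ) ≤ frobNorm D * matOpNorm WK := by
    rw [matOpNorm_transpose]
    exact (matOpNorm_mul_le D WK).trans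
      (mul_le_mul_of_nonneg_right (matOpNorm_le_frobNorm D) (matOpNorm_nonneg WK))
  have hSdiff : frobNorm (Sp - Sp')
      ≤ frobNorm (X * WQ) * (frobNorm D * matOpNorm WK) / Real.sqrt d := by
    refine (frobNorm_attnS_diff_le hd X WQ WK p p').trans ?_
    rw [← hD]
    gcongr
    exact (frobNorm_mul_le _ _).trans
      (mul_le_mul_of_nonneg_left hDK (frobNorm_nonneg _))
  have hpWV : matOpNorm (p * WV) ≤ pstar * matOpNorm WV :=
    (matOpNorm_mul_le p WV).trans
      (mul_le_mul_of_nonneg_right ((matOpNorm_le_frobNorm p).trans hp) (matOpNorm_nonneg WV))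
  have hDWV : matOpNorm (D * WV) ≤ frobNorm D * matOpNorm WV :=
    (matOpNorm_mul_le D WV).trans
      (mul_le_mul_of_nonneg_right (matOpNorm_le_frobNorm D) (matOpNorm_nonneg WV))
  have hT1 : frobNorm ((Sp - Sp') * (p * WV))
      ≤ (frobNorm (X * WQ) * (frobNorm D * matOpNorm WK) / Real.sqrt d)
        * (pstar * matOpNorm WV) :=
    (frobNorm_mul_le _ _).trans
      (mul_le_mul hSdiff hpWV (matOpNorm_nonneg _) hnonneg1)
  have hT2 : frobNorm (Sp' * (D * WV))
      ≤ Real.sqrt n * (frobNorm D * matOpNorm WV) :=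
    (frobNorm_mul_le _ _).trans
      (mul_le_mul (frobNorm_attnS_le hm X WQ WK p') hDWV (matOpNorm_nonneg _)
        (Real.sqrt_nonneg _))
  calc frobNorm ((Sp - Sp') * (p * WV) + Sp' * (D * WV))
      ≤ frobNorm ((Sp - Sp') * (p * WV)) + frobNorm (Sp' * (D * WV)) :=
        frobNorm_add_le _ _
    _ ≤ (frobNorm (X * WQ) * (frobNorm D * matOpNorm WK) / Real.sqrt d)
          * (pstar * matOpNorm WV) + Real.sqrt n * (frobNorm D * matOpNorm WV) :=
        add_le_add hT1 hT2
    _ = (frobNorm (X * WQ) * matOpNorm WK * matOpNorm WV * pstar / Real.sqrt d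
          + Real.sqrt n * matOpNorm WV) * frobNorm D := by ring
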